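/- At the critical level y_l one has K₁(y_l) = 1/(γ₁(r+q)e^{γ₁(r+q)b*_{r+q}} − γ₂(r+q)e^{γ₂(r+q)b*_{r+q}}), and consequently K₁(y_l)·(e^{γ₁(r+q)x} − e^{γ₂(r+q)x}) = V_{r+q}(x) for all x ∈ [0, b*_{r+q}]. -/

import Mathlib

open Real Set Filter

noncomputable def gam1 (μ σ ρ : ℝ) : ℝ := Real.sqrt (μ^2/σ^4 + 2*ρ/σ^2) - μ/σ^2

noncomputable def gam2 (μ σ ρ : ℝ) : ℝ := -Real.sqrt (μ^2/σ^4 + 2*ρ/σ^2) - μ/σ^2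

/-- The classical optimal dividend boundary `b*_ρ`. -/
noncomputable def bstar (μ σ ρ : ℝ) : ℝ :=
  Real.log ((gam2 μ σ ρ)^2 / (gam1 μ σ ρ)^2) / (gam1 μ σ ρ - gam2 μ σ ρ)

/-- The classical value function `V_ρ`. -/
noncomputable def Vfun (μ σ ρ x : ℝ) : ℝ :=
  if x < bstar μ σ ρ then
    (Real.exp (gam1 μ σ ρ * x) - Real.exp (gam2 μ σ ρ * x)) /
      (gam1 μ σ ρ * Real.exp (gam1 μ σ ρ * bstar μ σ ρ) -
        gam2 μ σ ρ * Real.exp (gam2 μ σ ρ * bstar μ σ ρ))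
  else
    (Real.exp (gam1 μ σ ρ * bstar μ σ ρ) - Real.exp (gam2 μ σ ρ * bstar μ σ ρ)) /
      (gam1 μ σ ρ * Real.exp (gam1 μ σ ρ * bstar μ σ ρ) -
        gam2 μ σ ρ * Real.exp (gam2 μ σ ρ * bstar μ σ ρ)) + x - bstar μ σ ρ

/-- `δ(y) = e^{γ₁(r+q)y} − e^{γ₂(r+q)y}`. -/
noncomputable def del (μ σ r q y : ℝ) : ℝ :=
  Real.exp (gam1 μ σ (r+q) * y) - Real.exp (gam2 μ σ (r+q) * y)

/-- `δ'(y)`. -/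
noncomputable def delP (μ σ r q y : ℝ) : ℝ :=
  gam1 μ σ (r+q) * Real.exp (gam1 μ σ (r+q) * y) -
    gam2 μ σ (r+q) * Real.exp (gam2 μ σ (r+q) * y)

/-- `δ''(y)`. -/
noncomputable def delPP (μ σ r q y : ℝ) : ℝ :=
  (gam1 μ σ (r+q))^2 * Real.exp (gam1 μ σ (r+q) * y) -
    (gam2 μ σ (r+q))^2 * Real.exp (gam2 μ σ (r+q) * y)

/-- `y_u := b*_{r+q} + μ/r − μ/(r+q)`. -/
noncomputable def yUpper (μ σ r q : ℝ) : ℝ := bstar μ σ (r+q) + μ/r - μ/(r+q)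

/-- `Δ(y)`. -/
noncomputable def DeltaF (μ σ r q y : ℝ) : ℝ :=
  (1/(gam1 μ σ r - gam2 μ σ r)) *
    Real.log ((gam2 μ σ r)^2 * (delP μ σ r q y - gam1 μ σ r * del μ σ r q y) /
      ((gam1 μ σ r)^2 * (delP μ σ r q y - gam2 μ σ r * del μ σ r q y)))

/-- `b*(y) = y + Δ(y)`. -/
noncomputable def bstarY (μ σ r q y : ℝ) : ℝ := y + DeltaF μ σ r q y

noncomputable def psiF (μ σ ρ x : ℝ) : ℝ := Real.exp (gam1 μ σ ρ * x)
noncomputable def phiF (μ σ ρ x : ℝ) : ℝ := Real.exp (gam2 μ σ ρ * x)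
noncomputable def psiP (μ σ ρ x : ℝ) : ℝ := gam1 μ σ ρ * Real.exp (gam1 μ σ ρ * x)
noncomputable def phiP (μ σ ρ x : ℝ) : ℝ := gam2 μ σ ρ * Real.exp (gam2 μ σ ρ * x)

/-- `η(y;b) = ψ'_r(b)φ_r(y) − φ'_r(b)ψ_r(y)`. -/
noncomputable def etaF (μ σ r y b : ℝ) : ℝ :=
  psiP μ σ r b * phiF μ σ r y - phiP μ σ r b * psiF μ σ r y

/-- `η'(y;b)` (derivative in `y`). -/
noncomputable def etaP (μ σ r y b : ℝ) : ℝ :=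
  psiP μ σ r b * phiP μ σ r y - phiP μ σ r b * psiP μ σ r y

/-- `K₁(y)`. -/
noncomputable def K1 (μ σ r q y : ℝ) : ℝ :=
  (psiF μ σ r y * etaP μ σ r y (bstarY μ σ r q y) -
    psiP μ σ r y * etaF μ σ r y (bstarY μ σ r q y)) /
  (psiP μ σ r (bstarY μ σ r q y) *
    (del μ σ r q y * etaP μ σ r y (bstarY μ σ r q y) -
      delP μ σ r q y * etaF μ σ r y (bstarY μ σ r q y)))

/-- `K₂(y) = −K₁(y)`. -/
noncomputable def K2 (μ σ r q y : ℝ) : ℝ := -K1 μ σ r q y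

/-- `K₃(y)`. -/
noncomputable def K3 (μ σ r q y : ℝ) : ℝ :=
  (phiP μ σ r (bstarY μ σ r q y) *
      (del μ σ r q y * psiP μ σ r y - delP μ σ r q y * psiF μ σ r y) +
    del μ σ r q y * etaP μ σ r y (bstarY μ σ r q y) -
      delP μ σ r q y * etaF μ σ r y (bstarY μ σ r q y)) /
  (psiP μ σ r (bstarY μ σ r q y) *
    (del μ σ r q y * etaP μ σ r y (bstarY μ σ r q y) -
      delP μ σ r q y * etaF μ σ r y (bstarY μ σ r q y)))

/-- `K₄(y)`. -/
noncomputable def K4 (μ σ r q y : ℝ) : ℝ :=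
  (psiF μ σ r y * delP μ σ r q y - psiP μ σ r y * del μ σ r q y) /
  (del μ σ r q y * etaP μ σ r y (bstarY μ σ r q y) -
    delP μ σ r q y * etaF μ σ r y (bstarY μ σ r q y))

/-- The candidate value function `w(·;y)` in the subcritical regime. -/
noncomputable def wfun (μ σ r q y x : ℝ) : ℝ :=
  if x < y then
    K1 μ σ r q y * Real.exp (gam1 μ σ (r+q) * x) + K2 μ σ r q y * Real.exp (gam2 μ σ (r+q) * x)
  else if x < bstarY μ σ r q y then
    K3 μ σ r q y * Real.exp (gam1 μ σ r * x) + K4 μ σ r q y * Real.exp (gam2 μ σ r * x)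
  else
    K3 μ σ r q y * Real.exp (gam1 μ σ r * bstarY μ σ r q y) +
      K4 μ σ r q y * Real.exp (gam2 μ σ r * bstarY μ σ r q y) + x - bstarY μ σ r q y

/-- The function `f` characterising the critical level `y_l`. -/
noncomputable def fF (μ σ r q y : ℝ) : ℝ :=
  (-(gam1 μ σ r / gam2 μ σ r) * delP μ σ r q y + gam1 μ σ r * del μ σ r q y) *
    ((gam2 μ σ r)^2/(gam1 μ σ r)^2 *
      ((delP μ σ r q y - gam1 μ σ r * del μ σ r q y) /
        (delP μ σ r q y - gam2 μ σ r * del μ σ r q y)))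
      ^ (gam1 μ σ r / (gam1 μ σ r - gam2 μ σ r))
  - delP μ σ r q (bstar μ σ (r+q))

noncomputable def e1F (μ σ r q b : ℝ) : ℝ :=
  (phiF μ σ (r+q) b - phiP μ σ (r+q) b * Vfun μ σ (r+q) b) /
  (psiP μ σ (r+q) b * phiF μ σ (r+q) b - psiF μ σ (r+q) b * phiP μ σ (r+q) b)

noncomputable def e2F (μ σ r q b : ℝ) : ℝ :=
  (psiP μ σ (r+q) b * Vfun μ σ (r+q) b - psiF μ σ (r+q) b) /
  (psiP μ σ (r+q) b * phiF μ σ (r+q) b - psiF μ σ (r+q) b * phiP μ σ (r+q) b)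

noncomputable def e3F (μ σ r q b y : ℝ) : ℝ :=
  (e1F μ σ r q b * (phiF μ σ r y * psiP μ σ (r+q) y - phiP μ σ r y * psiF μ σ (r+q) y) +
    e2F μ σ r q b * (phiF μ σ r y * phiP μ σ (r+q) y - phiP μ σ r y * phiF μ σ (r+q) y)) /
  (psiP μ σ r y * phiF μ σ r y - psiF μ σ r y * phiP μ σ r y)

noncomputable def e4F (μ σ r q b y : ℝ) : ℝ :=
  (e1F μ σ r q b * (psiP μ σ r y * psiF μ σ (r+q) y - psiF μ σ r y * psiP μ σ (r+q) y) +
    e2F μ σ r q b * (psiP μ σ r y * phiF μ σ (r+q) y - psiF μ σ r y * phiP μ σ (r+q) y)) /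
  (psiP μ σ r y * phiF μ σ r y - psiF μ σ r y * phiP μ σ r y)

/-- The function `H(b,y)` from the critical regime. -/
noncomputable def Hfun (μ σ r q b y : ℝ) : ℝ :=
  (gam1 μ σ r - gam2 μ σ r) *
    (-gam2 μ σ r / gam1 μ σ r) ^ ((gam1 μ σ r + gam2 μ σ r)/(gam1 μ σ r - gam2 μ σ r)) *
    (e3F μ σ r q b y) ^ (-gam2 μ σ r/(gam1 μ σ r - gam2 μ σ r)) *
    (-e4F μ σ r q b y) ^ (gam1 μ σ r/(gam1 μ σ r - gam2 μ σ r))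

/-- `Λ(b,y) = −e₄(b,y)/e₃(b,y)`. -/
noncomputable def Lamfun (μ σ r q b y : ℝ) : ℝ := -e4F μ σ r q b y / e3F μ σ r q b y

/-- `L(y)`. -/
noncomputable def Lfun (μ σ r q y : ℝ) : ℝ :=
  (1/(gam1 μ σ r - gam2 μ σ r)) *
    Real.log ((gam2 μ σ r)^2/(gam1 μ σ r)^2 * Lamfun μ σ r q y y) - y


/-!
Writing `b*(y) = y + Δ(y)` and cancelling the common exponentials in `y`, the quotient `K₁(y)` only
depends on the gap `Δ(y)`, which is chosen so that
`γ₁² (δ' - γ₂δ) e^{γ₁Δ} = γ₂² (δ' - γ₁δ) e^{γ₂Δ}` (all at rate `r`). With this relation,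
`1 / K₁(y) = (-(γ₁/γ₂) δ'(y) + γ₁ δ(y)) e^{γ₁Δ(y)}`, which is the first term of `f(y)`. So
`f = 1/K₁ - δ'(b*_{r+q})` identically, and `f(y_l) = 0` means `K₁(y_l) = 1/δ'(b*_{r+q})`;
on `[0, b*_{r+q}]` the value function `V_{r+q}` is `δ / δ'(b*_{r+q})`.
-/

section Roots

variable (μ σ : ℝ)

lemma abs_lt_sqrt_disc {ρ : ℝ} (hσ : σ ≠ 0) (hρ : 0 < ρ) :
    |μ / σ ^ 2| < √(μ ^ 2 / σ ^ 4 + 2 * ρ / σ ^ 2) := by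
  rw [Real.lt_sqrt (abs_nonneg _), sq_abs, div_pow, ← pow_mul]
  have : 0 < 2 * ρ / σ ^ 2 := by positivity
  linarith

lemma gam1_pos {ρ : ℝ} (hσ : σ ≠ 0) (hρ : 0 < ρ) : 0 < gam1 μ σ ρ :=
  sub_pos.mpr ((le_abs_self _).trans_lt (abs_lt_sqrt_disc μ σ hσ hρ))

lemma gam2_neg {ρ : ℝ} (hσ : σ ≠ 0) (hρ : 0 < ρ) : gam2 μ σ ρ < 0 := by
  have := abs_lt_sqrt_disc μ σ hσ hρ
  have := neg_abs_le (μ / σ ^ 2)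
  unfold gam2
  linarith

lemma sqrt_disc_monotone : Monotone fun ρ : ℝ => √(μ ^ 2 / σ ^ 4 + 2 * ρ / σ ^ 2) :=
  fun _ _ h => Real.sqrt_le_sqrt (by gcongr)

lemma gam1_monotone : Monotone (gam1 μ σ) :=
  fun _ _ h => sub_le_sub_right (sqrt_disc_monotone μ σ h) _

lemma gam2_antitone : Antitone (gam2 μ σ) :=
  fun _ _ h => sub_le_sub_right (neg_le_neg (sqrt_disc_monotone μ σ h)) _

end Roots

lemma Vfun_of_le (μ σ ρ : ℝ) {x : ℝ} (hx : x ≤ bstar μ σ ρ) :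
    Vfun μ σ ρ x = (exp (gam1 μ σ ρ * x) - exp (gam2 μ σ ρ * x)) /
      (gam1 μ σ ρ * exp (gam1 μ σ ρ * bstar μ σ ρ) -
        gam2 μ σ ρ * exp (gam2 μ σ ρ * bstar μ σ ρ)) := by
  unfold Vfun
  split_ifs with h
  · rfl
  · rw [le_antisymm hx (not_lt.mp h)]
    ring

lemma K1_eq_div_DeltaF (μ σ r q y : ℝ) (hg1 : gam1 μ σ r ≠ 0) :
    K1 μ σ r q y = (gam2 μ σ r - gam1 μ σ r) /
      (gam1 μ σ r * exp (gam1 μ σ r * DeltaF μ σ r q y) *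
          (gam2 μ σ r * del μ σ r q y - delP μ σ r q y) +
        gam2 μ σ r * exp (gam2 μ σ r * DeltaF μ σ r q y) *
          (delP μ σ r q y - gam1 μ σ r * del μ σ r q y)) := by
  unfold K1 etaF etaP psiF psiP phiF phiP bstarY
  set g1 := gam1 μ σ r
  set g2 := gam2 μ σ r
  set t := DeltaF μ σ r q y
  have hk : g1 * exp (g1 * y) ^ 2 * exp (g2 * y) * exp (g1 * t) ≠ 0 := by positivity
  simp only [mul_add, exp_add]
  rw [← mul_div_mul_left (g2 - g1) _ hk]
  congr 1 <;> ring

lemma inv_div_exp_log_ratio_eq_rpow {g1 g2 D D' : ℝ} (hg1 : 0 < g1) (hg2 : g2 < 0)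
    (hP : 0 < D' - g1 * D) (hQ : 0 < D' - g2 * D) :
    let t := 1 / (g1 - g2) *
      Real.log (g2 ^ 2 * (D' - g1 * D) / (g1 ^ 2 * (D' - g2 * D)))
    ((g2 - g1) / (g1 * exp (g1 * t) * (g2 * D - D') + g2 * exp (g2 * t) * (D' - g1 * D)))⁻¹ =
      (-(g1 / g2) * D' + g1 * D) *
        (g2 ^ 2 / g1 ^ 2 * ((D' - g1 * D) / (D' - g2 * D))) ^ (g1 / (g1 - g2)) := by
  intro t
  set A := g2 ^ 2 * (D' - g1 * D) / (g1 ^ 2 * (D' - g2 * D)) with hA_def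
  have hg12 : g1 - g2 ≠ 0 := by linarith
  have hg21 : g2 - g1 ≠ 0 := by linarith
  have hA : 0 < A := by
    have : 0 < g2 ^ 2 := by nlinarith
    positivity
  have hAQ : A * (g1 ^ 2 * (D' - g2 * D)) = g2 ^ 2 * (D' - g1 * D) := by
    rw [hA_def]
    field_simp
  have hrpow : (g2 ^ 2 / g1 ^ 2 * ((D' - g1 * D) / (D' - g2 * D))) ^ (g1 / (g1 - g2)) =
      exp (g1 * t) := by
    rw [div_mul_div_comm, rpow_def_of_pos hA]
    congr 1
    simp only [t]
    ring
  -- `t` is exactly the gap making `e^{(g1 - g2) t} = A`.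
  have hexp : exp (g1 * t) = A * exp (g2 * t) := by
    rw [← exp_log hA, ← exp_add]
    congr 1
    simp only [t]
    field_simp
    ring
  rw [hrpow, inv_div, hexp]
  clear_value A t
  have hg2' : g2 ≠ 0 := hg2.ne
  field_simp
  linear_combination -hAQ

lemma delP_sub_mul_del_pos (μ σ r q y : ℝ) {c : ℝ} (h₁ : gam2 μ σ (r + q) ≤ c)
    (h₂ : c ≤ gam1 μ σ (r + q)) (h : gam2 μ σ (r + q) < gam1 μ σ (r + q)) :
    0 < delP μ σ r q y - c * del μ σ r q y := by
  have e₁ := exp_pos (gam1 μ σ (r + q) * y)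
  have e₂ := exp_pos (gam2 μ σ (r + q) * y)
  have : delP μ σ r q y - c * del μ σ r q y =
      (gam1 μ σ (r + q) - c) * exp (gam1 μ σ (r + q) * y) +
        (c - gam2 μ σ (r + q)) * exp (gam2 μ σ (r + q) * y) := by
    unfold delP del
    ring
  rw [this]
  rcases h₂.lt_or_eq with h₂ | rfl
  · exact add_pos_of_pos_of_nonneg (mul_pos (sub_pos.mpr h₂) e₁)
      (mul_nonneg (sub_nonneg.mpr h₁) e₂.le)
  · simpa using mul_pos (sub_pos.mpr h) e₂

lemma fF_eq_inv_K1_sub (μ σ r q y : ℝ) (hσ : σ ≠ 0) (hr : 0 < r) (hq : 0 ≤ q) :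
    fF μ σ r q y = (K1 μ σ r q y)⁻¹ - delP μ σ r q (bstar μ σ (r + q)) := by
  have hg1 := gam1_pos μ σ hσ hr
  have hg2 := gam2_neg μ σ hσ hr
  have ha1 : gam1 μ σ r ≤ gam1 μ σ (r + q) := gam1_monotone μ σ (by linarith)
  have ha2 : gam2 μ σ (r + q) ≤ gam2 μ σ r := gam2_antitone μ σ (by linarith)
  have ha : gam2 μ σ (r + q) < gam1 μ σ (r + q) := by linarith
  have hP := delP_sub_mul_del_pos μ σ r q y (by linarith) ha1 ha
  have hQ := delP_sub_mul_del_pos μ σ r q y ha2 (by linarith) ha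
  rw [K1_eq_div_DeltaF μ σ r q y hg1.ne']
  unfold fF DeltaF
  rw [inv_div_exp_log_ratio_eq_rpow hg1 hg2 hP hQ]

theorem stmt10_general (μ σ r q : ℝ) (hσ : 0 < σ) (hr : 0 < r) (hq : 0 < q)
    (yl : ℝ) (hylf : fF μ σ r q yl = 0) :
    K1 μ σ r q yl =
      1 / (gam1 μ σ (r+q) * Real.exp (gam1 μ σ (r+q) * bstar μ σ (r+q)) -
        gam2 μ σ (r+q) * Real.exp (gam2 μ σ (r+q) * bstar μ σ (r+q))) ∧
    ∀ x ∈ Set.Icc 0 (bstar μ σ (r+q)),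
      K1 μ σ r q yl * (Real.exp (gam1 μ σ (r+q) * x) - Real.exp (gam2 μ σ (r+q) * x)) =
        Vfun μ σ (r+q) x := by
  have hK1 : K1 μ σ r q yl = 1 / delP μ σ r q (bstar μ σ (r + q)) := by
    have h := fF_eq_inv_K1_sub μ σ r q yl hσ.ne' hr hq.le
    rw [hylf, eq_comm, sub_eq_zero] at h
    rw [← h, one_div, inv_inv]
  refine ⟨hK1, fun x hx => ?_⟩
  rw [Vfun_of_le μ σ (r + q) hx.2, hK1, one_div_mul_eq_div]
  rfl

/-- at the critical level `y_l` one has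
`K₁(y_l) = 1/(γ₁(r+q)e^{γ₁(r+q)b*_{r+q}} − γ₂(r+q)e^{γ₂(r+q)b*_{r+q}})` and
`K₁(y_l)(e^{γ₁(r+q)x} − e^{γ₂(r+q)x}) = V_{r+q}(x)` for all `x ∈ [0,b*_{r+q}]`. -/
theorem stmt10 (μ σ r q : ℝ) (hμ : 0 < μ) (hσ : 0 < σ) (hr : 0 < r) (hq : 0 < q)
    (yl : ℝ) (hyl : yl ∈ Set.Ioo 0 (yUpper μ σ r q)) (hylf : fF μ σ r q yl = 0)
    (hyluniq : ∀ y ∈ Set.Ioo 0 (yUpper μ σ r q), fF μ σ r q y = 0 → y = yl)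
    (hylb : yl ∈ Set.Ioo (bstar μ σ (r+q)) (yUpper μ σ r q)) :
    K1 μ σ r q yl =
      1 / (gam1 μ σ (r+q) * Real.exp (gam1 μ σ (r+q) * bstar μ σ (r+q)) -
        gam2 μ σ (r+q) * Real.exp (gam2 μ σ (r+q) * bstar μ σ (r+q))) ∧
    ∀ x ∈ Set.Icc 0 (bstar μ σ (r+q)),
      K1 μ σ r q yl * (Real.exp (gam1 μ σ (r+q) * x) - Real.exp (gam2 μ σ (r+q) * x)) =
        Vfun μ σ (r+q) x :=
  stmt10_general μ σ r q hσ hr hq yl hylf
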